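/- arXiv:2102.02322 — 5 statements merged into one kernel-verified Lean document; each statement's English description precedes it below -/
import Mathlib

section
/- For any real numbers a and b and any p ∈ (1,2], there is a universal constant C (e.g. C = 10) such that | |a-b|^p - |a|^p + p·|a|^{p-1}·sign(a)·b | ≤ C·|b|^p. -/
/-!
`f(x) = |x|^p` is differentiable with `f'(x) = p |x|^{p-1} sign x`, and `f'` is `(p-1)`-Hölder
with constant `2p`: for `x, y` of equal sign this is the subadditivity of `t ↦ t^{p-1}`, and for
opposite signs both `|x|^{p-1}` and `|y|^{p-1}` are at most `|x - y|^{p-1}`. The mean value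
inequality applied to `t ↦ f(a - t) + f'(a) t` on the segment `[0, b]` then bounds the
first-order Taylor remainder by `2p |b|^{p-1} |b| ≤ 4 |b|^p`.
-/

open Real Set

lemma abs_rpow_sub_rpow_le {x y s : ℝ} (hx : 0 ≤ x) (hy : 0 ≤ y) (hs0 : 0 ≤ s) (hs1 : s ≤ 1) :
    |x ^ s - y ^ s| ≤ |x - y| ^ s := by
  wlog hyx : y ≤ x generalizing x y
  · rw [abs_sub_comm, abs_sub_comm x]
    exact this hy hx (le_of_not_ge hyx)
  have hsub : x ^ s ≤ y ^ s + (x - y) ^ s := by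
    simpa using rpow_add_le_add_rpow hy (sub_nonneg.mpr hyx) hs0 hs1
  have hmono : y ^ s ≤ x ^ s := rpow_le_rpow hy hyx hs0
  rw [abs_of_nonneg (sub_nonneg.mpr hmono), abs_of_nonneg (sub_nonneg.mpr hyx)]
  linarith

lemma abs_rpow_mul_sign_of_nonneg {s z : ℝ} (hs : 0 < s) (hz : 0 ≤ z) :
    |z| ^ s * sign z = z ^ s := by
  rcases hz.eq_or_lt with rfl | hz
  · simp [zero_rpow hs.ne']
  · rw [abs_of_pos hz, sign_of_pos hz, mul_one]

lemma abs_rpow_mul_sign_of_nonpos {s z : ℝ} (hs : 0 < s) (hz : z ≤ 0) :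
    |z| ^ s * sign z = -(-z) ^ s := by
  have h := abs_rpow_mul_sign_of_nonneg hs (neg_nonneg.mpr hz)
  rw [abs_neg, sign_neg] at h
  linarith

lemma abs_rpow_mul_sign_sub_le {s : ℝ} (hs0 : 0 < s) (hs1 : s ≤ 1) (x y : ℝ) :
    |(|x| ^ s * sign x - |y| ^ s * sign y)| ≤ 2 * |x - y| ^ s := by
  wlog hyx : y ≤ x generalizing x y
  · rw [abs_sub_comm, abs_sub_comm x]
    exact this y x (le_of_not_ge hyx)
  have hpos : 0 ≤ |x - y| ^ s := by positivity
  rcases le_total 0 y with hy | hy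
  · rw [abs_rpow_mul_sign_of_nonneg hs0 hy, abs_rpow_mul_sign_of_nonneg hs0 (hy.trans hyx)]
    linarith [abs_rpow_sub_rpow_le (hy.trans hyx) hy hs0.le hs1]
  rcases le_total x 0 with hx | hx
  · rw [abs_rpow_mul_sign_of_nonpos hs0 hy, abs_rpow_mul_sign_of_nonpos hs0 hx]
    have h := abs_rpow_sub_rpow_le (neg_nonneg.mpr hy) (neg_nonneg.mpr hx) hs0.le hs1
    rw [show -y - -x = x - y by ring] at h
    rw [neg_sub_neg]
    exact h.trans (by linarith)
  · rw [abs_rpow_mul_sign_of_nonneg hs0 hx, abs_rpow_mul_sign_of_nonpos hs0 hy,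
      abs_of_nonneg (sub_nonneg.mpr hyx), sub_neg_eq_add,
      abs_of_nonneg (add_nonneg (rpow_nonneg hx s) (rpow_nonneg (neg_nonneg.mpr hy) s)), two_mul]
    gcongr <;> linarith

lemma hasDerivAt_abs_rpow' (x : ℝ) {p : ℝ} (hp : 1 < p) :
    HasDerivAt (fun x : ℝ ↦ |x| ^ p) (p * |x| ^ (p - 1) * sign x) x := by
  convert hasDerivAt_abs_rpow x hp using 1
  rcases lt_trichotomy x 0 with hx | rfl | hx
  · rw [sign_of_neg hx, abs_of_neg hx, show p - 1 = p - 2 + 1 by ring,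
      rpow_add_one (by linarith)]
    ring
  · simp
  · rw [sign_of_pos hx, abs_of_pos hx, show p - 1 = p - 2 + 1 by ring, rpow_add_one hx.ne']
    ring

lemma abs_sub_sub_add_mul_le_of_holder {f f' : ℝ → ℝ} {K s : ℝ} (hs : 0 ≤ s)
    (hf : ∀ x, HasDerivAt f (f' x) x) (hf' : ∀ x y, |f' x - f' y| ≤ K * |x - y| ^ s)
    (a b : ℝ) : |f (a - b) - f a + f' a * b| ≤ K * |b| ^ (s + 1) := by
  have hK : 0 ≤ K := by simpa using (abs_nonneg _).trans (hf' 1 0)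
  have hg : ∀ t ∈ uIcc 0 b,
      HasDerivWithinAt (fun t ↦ f (a - t) + f' a * t) (-f' (a - t) + f' a) (uIcc 0 b) t := by
    intro t _
    have h := ((hf (a - t)).comp_const_sub a t).add ((hasDerivAt_id t).const_mul (f' a))
    rw [mul_one] at h
    exact h.hasDerivWithinAt
  have hbound : ∀ t ∈ uIcc 0 b, ‖-f' (a - t) + f' a‖ ≤ K * |b| ^ s := by
    intro t ht
    have htb : |t| ≤ |b| := by simpa using abs_sub_left_of_mem_uIcc ht
    calc ‖-f' (a - t) + f' a‖ = |f' a - f' (a - t)| := by rw [Real.norm_eq_abs]; ring_nf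
      _ ≤ K * |t| ^ s := by simpa using hf' a (a - t)
      _ ≤ K * |b| ^ s := by gcongr
  have h := (convex_uIcc 0 b).norm_image_sub_le_of_norm_hasDerivWithin_le hg hbound
    left_mem_uIcc right_mem_uIcc
  rw [rpow_add_one' (abs_nonneg b) (by linarith), ← mul_assoc]
  simpa [Real.norm_eq_abs, add_sub_right_comm] using h

/-- For any real numbers `a` and `b` and any `p ∈ (1,2]`, there is a universal constant `C`
such that `| |a-b|^p - |a|^p + p·|a|^{p-1}·sign(a)·b | ≤ C·|b|^p`. -/
theorem taylor_expansion_abs_rpow :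
    ∃ C : ℝ, 0 < C ∧ ∀ p ∈ Set.Ioc (1 : ℝ) 2, ∀ a b : ℝ,
      |(|a - b| ^ p - |a| ^ p + p * |a| ^ (p - 1) * Real.sign a * b)| ≤ C * |b| ^ p := by
  refine ⟨4, by norm_num, fun p ⟨hp1, hp2⟩ a b ↦ ?_⟩
  have holder : ∀ x y, |p * |x| ^ (p - 1) * sign x - p * |y| ^ (p - 1) * sign y|
      ≤ 2 * p * |x - y| ^ (p - 1) := fun x y ↦ by
    rw [mul_assoc, mul_assoc, ← mul_sub, abs_mul, abs_of_pos (by linarith), mul_comm 2 p,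
      mul_assoc]
    exact mul_le_mul_of_nonneg_left
      (abs_rpow_mul_sign_sub_le (by linarith) (by linarith) x y) (by linarith)
  have h := abs_sub_sub_add_mul_le_of_holder (by linarith)
    (fun x ↦ hasDerivAt_abs_rpow' x hp1) holder a b
  rw [sub_add_cancel] at h
  calc _ ≤ 2 * p * |b| ^ p := h
    _ ≤ 4 * |b| ^ p := by gcongr; linarith
end

section
/- Let A ∈ ℝ^{n×d} with A^⊤A = I and suppose every row satisfies ‖a_i‖_2^2 = d/n. Then for any p ∈ [1,2] and every row i, max_{x ≠ 0} |a_i^⊤x|^p / ‖Ax‖_p^p ≤ d/n. -/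
/-!
Write `y = A x`. Since `AᵀA = I`, `∑ⱼ yⱼ² = ‖x‖²`, and Cauchy–Schwarz with `‖aⱼ‖² = d/n` gives
`yⱼ² ≤ (d/n) ∑ₖ yₖ²` for every `j`. For such a vector, let `m = maxⱼ |yⱼ|`. Interpolating between
the exponents `p` and `2` gives `∑ⱼ yⱼ² ≤ m^(2-p) ∑ⱼ |yⱼ|^p`, so `m² ≤ (d/n) m^(2-p) ∑ⱼ |yⱼ|^p`,
i.e. `|yᵢ|^p ≤ m^p ≤ (d/n) ∑ⱼ |yⱼ|^p`.
-/

open Matrix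

theorem sq_le_rpow_abs_mul_rpow {t m p : ℝ} (htm : |t| ≤ m) (hp : p ≤ 2) :
    t ^ 2 ≤ |t| ^ p * m ^ (2 - p) := by
  have hm : 0 ≤ m := (abs_nonneg t).trans htm
  rcases eq_or_ne t 0 with rfl | ht
  · simpa using mul_nonneg (Real.rpow_nonneg le_rfl p) (Real.rpow_nonneg hm (2 - p))
  calc t ^ 2 = |t| ^ p * |t| ^ (2 - p) := by
        rw [← Real.rpow_add (abs_pos.mpr ht), add_sub_cancel, Real.rpow_two, sq_abs]
    _ ≤ |t| ^ p * m ^ (2 - p) := by gcongr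

theorem sum_sq_le_rpow_mul_sum_rpow_abs {ι : Type*} [Fintype ι] {y : ι → ℝ} {m p : ℝ}
    (hym : ∀ j, |y j| ≤ m) (hp : p ≤ 2) :
    ∑ j, y j ^ 2 ≤ m ^ (2 - p) * ∑ j, |y j| ^ p := by
  rw [Finset.mul_sum]
  exact Finset.sum_le_sum fun j _ => (sq_le_rpow_abs_mul_rpow (hym j) hp).trans_eq (mul_comm _ _)

theorem rpow_abs_le_mul_sum_rpow_abs_of_forall_abs_le {ι : Type*} [Fintype ι] {y : ι → ℝ} {K p : ℝ}
    (hp0 : 0 < p) (hp2 : p ≤ 2) {i : ι} (hmax : ∀ j, |y j| ≤ |y i|)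
    (hi : y i ^ 2 ≤ K * ∑ k, y k ^ 2) :
    |y i| ^ p ≤ K * ∑ j, |y j| ^ p := by
  rcases (abs_nonneg (y i)).eq_or_lt with hzero | hpos
  · have hy : ∀ j, y j = 0 := fun j => abs_nonpos_iff.mp (hzero ▸ hmax j)
    simp [hy, Real.zero_rpow hp0.ne']
  set S := ∑ j, |y j| ^ p
  have hinterp : ∑ k, y k ^ 2 ≤ |y i| ^ (2 - p) * S := sum_sq_le_rpow_mul_sum_rpow_abs hmax hp2
  have hK : 0 < K := by
    have : 0 < K * ∑ k, y k ^ 2 := (pow_pos hpos 2).trans_le (by rwa [sq_abs])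
    exact pos_of_mul_pos_left this (Finset.sum_nonneg fun k _ => sq_nonneg (y k))
  have hgap : 0 < |y i| ^ (2 - p) := Real.rpow_pos_of_pos hpos _
  refine le_of_mul_le_mul_right ?_ hgap
  calc |y i| ^ p * |y i| ^ (2 - p) = y i ^ 2 := by
        rw [← Real.rpow_add hpos, add_sub_cancel, Real.rpow_two, sq_abs]
    _ ≤ K * (|y i| ^ (2 - p) * S) := hi.trans (mul_le_mul_of_nonneg_left hinterp hK.le)
    _ = K * S * |y i| ^ (2 - p) := by ring

theorem rpow_abs_le_mul_sum_rpow_abs {ι : Type*} [Fintype ι] {y : ι → ℝ} {K p : ℝ}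
    (hp0 : 0 < p) (hp2 : p ≤ 2) (hy : ∀ j, y j ^ 2 ≤ K * ∑ k, y k ^ 2) (i : ι) :
    |y i| ^ p ≤ K * ∑ j, |y j| ^ p := by
  have : Nonempty ι := ⟨i⟩
  obtain ⟨j₀, hj₀⟩ := Finite.exists_max fun j => |y j|
  calc |y i| ^ p ≤ |y j₀| ^ p := Real.rpow_le_rpow (abs_nonneg _) (hj₀ i) hp0.le
    _ ≤ K * ∑ j, |y j| ^ p := rpow_abs_le_mul_sum_rpow_abs_of_forall_abs_le hp0 hp2 hj₀ (hy j₀)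

theorem sum_sq_dotProduct_of_transpose_mul_self_eq_one {m n : Type*} [Fintype m] [Fintype n]
    [DecidableEq n] {A : Matrix m n ℝ} (hA : Aᵀ * A = 1) (x : n → ℝ) :
    ∑ j, (A j ⬝ᵥ x) ^ 2 = ∑ k, x k ^ 2 := by
  have : (A *ᵥ x) ⬝ᵥ (A *ᵥ x) = x ⬝ᵥ x := by
    rw [dotProduct_mulVec, ← vecMul_transpose, vecMul_vecMul, hA, vecMul_one]
  simpa [dotProduct, mulVec, sq] using this

theorem importance_weight_upper_bound_uniform_leverage_general {n d : ℕ}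
    (A : Matrix (Fin n) (Fin d) ℝ) (hA : Aᵀ * A = 1)
    (hrow : ∀ i, ∑ j, (A i j) ^ 2 = (d : ℝ) / n) :
    ∀ p ∈ Set.Icc (1 : ℝ) 2, ∀ (i : Fin n), ∀ x : Fin d → ℝ, x ≠ 0 →
      |A i ⬝ᵥ x| ^ p / (∑ j, |A j ⬝ᵥ x| ^ p) ≤ (d : ℝ) / n := by
  rintro p ⟨hp1, hp2⟩ i x -
  have hcoherent : ∀ j, (A j ⬝ᵥ x) ^ 2 ≤ d / n * ∑ k, (A k ⬝ᵥ x) ^ 2 := fun j => by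
    rw [sum_sq_dotProduct_of_transpose_mul_self_eq_one hA, ← hrow j]
    exact Finset.sum_mul_sq_le_sq_mul_sq _ _ _
  refine div_le_of_le_mul₀ (Finset.sum_nonneg fun j _ => by positivity) (by positivity) ?_
  exact rpow_abs_le_mul_sum_rpow_abs (y := fun j => A j ⬝ᵥ x) (by linarith) hp2 hcoherent i

/-- If `AᵀA = I` and every row satisfies `‖a_i‖_2^2 = d/n`, then for any `p ∈ [1,2]`
and every row `i`, `max_{x ≠ 0} |a_i^⊤x|^p / ‖Ax‖_p^p ≤ d/n`. -/
theorem importance_weight_upper_bound_uniform_leverage {n d : ℕ} (hn : 0 < n)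
    (A : Matrix (Fin n) (Fin d) ℝ) (hA : Aᵀ * A = 1)
    (hrow : ∀ i, ∑ j, (A i j) ^ 2 = (d : ℝ) / n) :
    ∀ p ∈ Set.Icc (1 : ℝ) 2, ∀ (i : Fin n), ∀ x : Fin d → ℝ, x ≠ 0 →
      |A i ⬝ᵥ x| ^ p / (∑ j, |A j ⬝ᵥ x| ^ p) ≤ (d : ℝ) / n :=
  importance_weight_upper_bound_uniform_leverage_general A hA hrow
end

section
/- Let A ∈ ℝ^{n×d} with rows a_i, let W = diag(w_1,…,w_n) with all w_i > 0, assume A^⊤W^{−1}A is invertible, and suppose a_i^⊤(A^⊤W^{−1}A)^{−1}a_i = w_i^2 for all i (i.e., w are the ℓ_1 Lewis weights). If additionally w_i ≤ u for all i, then the projection Π = A(A^⊤W^{−1}A)^{−1}A^⊤W^{−1} has all its columns Π_i satisfying ‖Π_i‖_2^2 ≤ u. -/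
/-!
Put `M = AᵀW⁻¹A` and `v = M⁻¹aᵢ`, so that `Πⱼᵢ = wᵢ⁻¹ ⟨aⱼ, v⟩`. The Lewis condition says
`∑ⱼ wⱼ⁻¹ ⟨aⱼ, v⟩² = vᵀMv = aᵢᵀM⁻¹aᵢ = wᵢ²`, and since `wⱼ ≤ u` this gives
`∑ⱼ ⟨aⱼ, v⟩² ≤ u wᵢ²`; dividing by `wᵢ²` bounds `‖Πᵢ‖²` by `u`.
-/

open Matrix

namespace Matrix

variable {m n R K : Type*} [Fintype m] [Fintype n]

theorem inv_diagonal_of_ne_zero [DecidableEq m] [Field K] {w : m → K} (hw : ∀ i, w i ≠ 0) :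
    (diagonal w)⁻¹ = diagonal w⁻¹ :=
  inv_eq_right_inv <| by
    rw [diagonal_mul_diagonal, ← diagonal_one]
    exact congrArg diagonal (funext fun i => mul_inv_cancel₀ (hw i))

theorem dotProduct_mulVec_transpose_mul_diagonal_mul [DecidableEq m] [CommSemiring R]
    (A : Matrix m n R) (c : m → R) (x : n → R) :
    x ⬝ᵥ ((Aᵀ * diagonal c * A) *ᵥ x) = ∑ j, c j * (A j ⬝ᵥ x) ^ 2 := by
  rw [← mulVec_mulVec, ← mulVec_mulVec, dotProduct_mulVec, vecMul_transpose]
  refine Finset.sum_congr rfl fun j _ => ?_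
  rw [mulVec_diagonal]
  change (A j ⬝ᵥ x) * (c j * (A j ⬝ᵥ x)) = _
  ring

theorem mul_mul_transpose_mul_diagonal_apply [DecidableEq m] [CommSemiring R]
    (A : Matrix m n R) (N : Matrix n n R) (c : m → R) (j i : m) :
    (A * N * Aᵀ * diagonal c) j i = c i * (A j ⬝ᵥ (N *ᵥ A i)) := by
  rw [mul_diagonal, mul_comm, Matrix.mul_assoc, mul_apply']
  rfl

theorem dotProduct_mulVec_nonsing_inv_mulVec [DecidableEq n] [CommRing R] {M : Matrix n n R}
    (hM : IsUnit M) (a : n → R) :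
    (M⁻¹ *ᵥ a) ⬝ᵥ (M *ᵥ (M⁻¹ *ᵥ a)) = a ⬝ᵥ (M⁻¹ *ᵥ a) := by
  rw [mulVec_mulVec, mul_nonsing_inv _ ((isUnit_iff_isUnit_det M).mp hM), one_mulVec,
    dotProduct_comm]

end Matrix

theorem Finset.sum_sq_le_mul_sum_inv_mul_sq {ι K : Type*} [Field K] [LinearOrder K]
    [IsStrictOrderedRing K] (s : Finset ι) {w x : ι → K} {u : K} (hw : ∀ j ∈ s, 0 < w j)
    (hu : ∀ j ∈ s, w j ≤ u) :
    ∑ j ∈ s, x j ^ 2 ≤ u * ∑ j ∈ s, (w j)⁻¹ * x j ^ 2 := by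
  rw [Finset.mul_sum]
  refine Finset.sum_le_sum fun j hj => ?_
  calc x j ^ 2 = w j * ((w j)⁻¹ * x j ^ 2) := by field_simp [(hw j hj).ne']
    _ ≤ u * ((w j)⁻¹ * x j ^ 2) :=
      mul_le_mul_of_nonneg_right (hu j hj) (mul_nonneg (inv_nonneg.2 (hw j hj).le) (sq_nonneg _))

/-- If `w` are the ℓ₁ Lewis weights of `A` (i.e., `a_i^⊤(AᵀW⁻¹A)⁻¹a_i = w_i²`) and
`w_i ≤ u` for all `i`, then every column `Π_i` of the weighted projection
`Π = A(AᵀW⁻¹A)⁻¹AᵀW⁻¹` satisfies `‖Π_i‖_2² ≤ u`. -/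
theorem lewis_projection_column_norm_bound {n d : ℕ}
    (A : Matrix (Fin n) (Fin d) ℝ) (w : Fin n → ℝ) (u : ℝ)
    (hw : ∀ i, 0 < w i)
    (hM : IsUnit (Aᵀ * (Matrix.diagonal w)⁻¹ * A))
    (hlewis : ∀ i, A i ⬝ᵥ ((Aᵀ * (Matrix.diagonal w)⁻¹ * A)⁻¹ *ᵥ A i) = (w i) ^ 2)
    (hu : ∀ i, w i ≤ u) :
    ∀ i, ∑ j, ((A * (Aᵀ * (Matrix.diagonal w)⁻¹ * A)⁻¹ * Aᵀ *
      (Matrix.diagonal w)⁻¹) j i) ^ 2 ≤ u := by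
  intro i
  rw [inv_diagonal_of_ne_zero fun j => (hw j).ne'] at hM hlewis ⊢
  set M := Aᵀ * diagonal w⁻¹ * A
  set v := M⁻¹ *ᵥ A i
  have hquad : ∑ j, (w j)⁻¹ * (A j ⬝ᵥ v) ^ 2 = w i ^ 2 := by
    rw [← hlewis i, ← dotProduct_mulVec_nonsing_inv_mulVec hM,
      dotProduct_mulVec_transpose_mul_diagonal_mul]
    rfl
  calc ∑ j, ((A * M⁻¹ * Aᵀ * diagonal w⁻¹) j i) ^ 2
      = (w i)⁻¹ ^ 2 * ∑ j, (A j ⬝ᵥ v) ^ 2 := by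
        simp only [mul_mul_transpose_mul_diagonal_apply, Pi.inv_apply, mul_pow, Finset.mul_sum]
        rfl
    _ ≤ (w i)⁻¹ ^ 2 * (u * w i ^ 2) := by
        rw [← hquad]
        gcongr
        exact Finset.sum_sq_le_mul_sum_inv_mul_sq _ (fun j _ => hw j) fun j _ => hu j
    _ = u := by field_simp [(hw i).ne']
end

section
/- Let A ∈ ℝ^{n×d} whose ℓ_p Lewis weights are (w_1,…,w_n) for p ∈ [1,2], and let A' ∈ ℝ^{(n+k−1)×d} be obtained by replacing the last row a_n with k copies of a_n/k^{1/p}. Then the ℓ_p Lewis weights of A' are (w_1,…,w_{n−1}, w_n/k, …, w_n/k). -/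
open Matrix

/-- `w` satisfies the defining equations of the ℓ_p Lewis weights of `A`:
`a_i^⊤ (Aᵀ diag(w)^{1-2/p} A)⁻¹ a_i = w_i^{2/p}` with all `w_i > 0`. -/
def IsLewisWeight (p : ℝ) {ι : Type*} [Fintype ι] [DecidableEq ι] {d : ℕ}
    (A : Matrix ι (Fin d) ℝ) (w : ι → ℝ) : Prop :=
  (∀ i, 0 < w i) ∧
    ∀ i, A i ⬝ᵥ ((Aᵀ * Matrix.diagonal (fun j => w j ^ (1 - 2 / p)) * A)⁻¹ *ᵥ A i) =
      w i ^ (2 / p)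

/-!
Splitting the row `a` into `k` copies of `a / k^{1/p}` with weights `w_n / k` leaves the matrix
`Aᵀ W^{1-2/p} A` unchanged, because `k · (w_n/k)^{1-2/p} · k^{-2/p} = w_n^{1-2/p}`. Hence the
Lewis equations of the untouched rows are literally the old ones, and for each new row both
sides of the equation are the old ones scaled by `k^{-2/p}`.
-/

noncomputable def lewisGram (p : ℝ) {ι n : Type*} [Fintype ι] [DecidableEq ι]
    (A : Matrix ι n ℝ) (w : ι → ℝ) : Matrix n n ℝ :=
  Aᵀ * diagonal (fun i => w i ^ (1 - 2 / p)) * A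

section LewisGram

variable (p : ℝ) {ι ι₁ ι₂ n : Type*} [Fintype ι] [DecidableEq ι] [Fintype ι₁] [DecidableEq ι₁]
  [Fintype ι₂] [DecidableEq ι₂]

theorem isLewisWeight_iff {d : ℕ} (A : Matrix ι (Fin d) ℝ) (w : ι → ℝ) :
    IsLewisWeight p A w ↔
      (∀ i, 0 < w i) ∧ ∀ i, A i ⬝ᵥ ((lewisGram p A w)⁻¹ *ᵥ A i) = w i ^ (2 / p) :=
  Iff.rfl

theorem lewisGram_fromRows (A₁ : Matrix ι₁ n ℝ) (A₂ : Matrix ι₂ n ℝ) (w₁ : ι₁ → ℝ)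
    (w₂ : ι₂ → ℝ) :
    lewisGram p (fromRows A₁ A₂) (Sum.elim w₁ w₂) = lewisGram p A₁ w₁ + lewisGram p A₂ w₂ := by
  have hdiag : (fun i => Sum.elim w₁ w₂ i ^ (1 - 2 / p)) =
      Sum.elim (fun i => w₁ i ^ (1 - 2 / p)) (fun i => w₂ i ^ (1 - 2 / p)) := by
    ext (i | i) <;> rfl
  rw [lewisGram, hdiag, ← fromBlocks_diagonal, transpose_fromRows, fromCols_mul_fromBlocks,
    fromCols_mul_fromRows]
  simp [lewisGram]

theorem lewisGram_replicateRow (v : n → ℝ) (s : ℝ) :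
    lewisGram p (replicateRow ι v) (fun _ => s) =
      (Fintype.card ι * s ^ (1 - 2 / p)) • vecMulVec v v := by
  ext x y
  rw [lewisGram, Matrix.mul_assoc, mul_apply]
  simp [vecMulVec_apply]
  ring

end LewisGram

theorem Real.rpow_one_div_mul_self {x : ℝ} (hx : 0 < x) (p : ℝ) :
    x ^ (1 / p) * x ^ (1 / p) = x ^ (2 / p) := by
  rw [← Real.rpow_add hx]
  ring_nf

theorem lewisGram_replicateRow_split (p : ℝ) {ι n : Type*} [Fintype ι] [DecidableEq ι]
    [Nonempty ι] (a : n → ℝ) {w : ℝ} (hw : 0 ≤ w) :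
    lewisGram p (replicateRow ι (((Fintype.card ι : ℝ) ^ (1 / p))⁻¹ • a))
        (fun _ => w / Fintype.card ι) =
      lewisGram p (replicateRow Unit a) (fun _ => w) := by
  set k : ℝ := (Fintype.card ι : ℝ)
  have hk : 0 < k := Nat.cast_pos.mpr Fintype.card_pos
  have hscale : k * (w / k) ^ (1 - 2 / p) * (k ^ (1 / p))⁻¹ * (k ^ (1 / p))⁻¹ =
      w ^ (1 - 2 / p) := by
    rw [mul_assoc _ (k ^ (1 / p))⁻¹, ← mul_inv, Real.rpow_one_div_mul_self hk,
      Real.div_rpow hw hk.le, Real.rpow_sub hk 1, Real.rpow_one]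
    field_simp
  rw [lewisGram_replicateRow, lewisGram_replicateRow, smul_vecMulVec, vecMulVec_smul, smul_smul,
    smul_smul, hscale, Fintype.card_unit, Nat.cast_one, one_mul]

theorem lewis_weights_of_split_row_general {α : Type*} [Fintype α] [DecidableEq α]
    {d k : ℕ} (hk : 0 < k) (p : ℝ)
    (A₀ : Matrix α (Fin d) ℝ) (a : Fin d → ℝ) (w : α → ℝ) (wn : ℝ)
    (h : IsLewisWeight p (Matrix.of (Sum.elim A₀ (fun _ : Unit => a)))
      (Sum.elim w (fun _ : Unit => wn))) :
    IsLewisWeight p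
      (Matrix.of (Sum.elim A₀ (fun _ : Fin k => fun j => a j / (k : ℝ) ^ (1 / p))))
      (Sum.elim w (fun _ : Fin k => wn / k)) := by
  rw [isLewisWeight_iff] at h ⊢
  obtain ⟨hpos, hlewis⟩ := h
  have : Nonempty (Fin k) := Fin.pos_iff_nonempty.mp hk
  have hk' : (0 : ℝ) < k := Nat.cast_pos.mpr hk
  have hwn : 0 < wn := hpos (.inr ())
  set c : ℝ := (k : ℝ) ^ (1 / p)
  have hc : c * c = (k : ℝ) ^ (2 / p) := Real.rpow_one_div_mul_self hk' p
  have hsplit : Matrix.of (Sum.elim A₀ (fun _ : Fin k => fun j => a j / c)) =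
      fromRows A₀ (replicateRow (Fin k) (c⁻¹ • a)) := by
    rw [fromRows]
    congr
    ext i j
    simp [div_eq_inv_mul]
  have hgram : lewisGram p (fromRows A₀ (replicateRow (Fin k) (c⁻¹ • a)))
      (Sum.elim w fun _ => wn / k) =
        lewisGram p (fromRows A₀ (replicateRow Unit a)) (Sum.elim w fun _ => wn) := by
    have hblock := lewisGram_replicateRow_split p (ι := Fin k) a hwn.le
    rw [Fintype.card_fin] at hblock
    rw [lewisGram_fromRows, lewisGram_fromRows, hblock]
  rw [hsplit]
  refine ⟨?_, ?_⟩
  · rintro (i | i)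
    exacts [hpos (.inl i), div_pos hwn hk']
  · rintro (i | i) <;> rw [hgram]
    · exact hlewis (.inl i)
    · have hrow : a ⬝ᵥ (lewisGram p (fromRows A₀ (replicateRow Unit a))
          (Sum.elim w fun _ => wn))⁻¹ *ᵥ a = wn ^ (2 / p) := hlewis (.inr ())
      change (c⁻¹ • a) ⬝ᵥ _ *ᵥ (c⁻¹ • a) = (wn / k) ^ (2 / p)
      rw [mulVec_smul, smul_dotProduct, dotProduct_smul, hrow, smul_eq_mul, smul_eq_mul,
        Real.div_rpow hwn.le hk'.le, ← hc]
      field_simp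

/-- Splitting the last row `a` of a matrix into `k` copies of `a/k^{1/p}` replaces its
ℓ_p Lewis weight `w_n` by `k` copies of `w_n/k`, keeping the other Lewis weights. -/
theorem lewis_weights_of_split_row {α : Type*} [Fintype α] [DecidableEq α]
    {d k : ℕ} (hk : 0 < k) (p : ℝ) (hp : p ∈ Set.Icc (1 : ℝ) 2)
    (A₀ : Matrix α (Fin d) ℝ) (a : Fin d → ℝ) (w : α → ℝ) (wn : ℝ)
    (h : IsLewisWeight p (Matrix.of (Sum.elim A₀ (fun _ : Unit => a)))
      (Sum.elim w (fun _ : Unit => wn))) :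
    IsLewisWeight p
      (Matrix.of (Sum.elim A₀ (fun _ : Fin k => fun j => a j / (k : ℝ) ^ (1 / p))))
      (Sum.elim w (fun _ : Fin k => wn / k)) :=
  lewis_weights_of_split_row_general hk p A₀ a w wn h
end

section
/- Let A ∈ ℝ^{n×d} with A^⊤A = I, p ∈ (1,2), and suppose each row a_i satisfies |a_i^⊤x|^p ≤ (αd/n)·‖Ax‖_p^p for all x (almost uniform ℓ_p importance weights). Then for every β ∈ ℝ^d, ‖β‖_2 ≤ ‖Aβ‖_p · (α·d/n)^{(2−p)/(2p)}. -/
/-!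
Since `AᵀA = I`, `‖β‖₂ = ‖Aβ‖₂`. Writing `yᵢ = aᵢᵀβ` and `s = ‖y‖_p`, the importance bound gives
`|yᵢ|^{2-p} = (|yᵢ|^p)^{(2-p)/p} ≤ (c s^p)^{(2-p)/p}` with `c = αd/n`, so
`‖y‖₂² = ∑ |yᵢ|^p |yᵢ|^{2-p} ≤ s^p · c^{(2-p)/p} s^{2-p} = s² c^{(2-p)/p}`.
-/

open Matrix

theorem Matrix.sum_sq_dotProduct_eq_of_transpose_mul_self_eq_one {m k : Type*} [Fintype m]
    [Fintype k] [DecidableEq k] {A : Matrix m k ℝ} (hA : Aᵀ * A = 1) (β : k → ℝ) :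
    ∑ i, (A i ⬝ᵥ β) ^ 2 = ∑ j, β j ^ 2 := by
  have h : (A *ᵥ β) ⬝ᵥ (A *ᵥ β) = β ⬝ᵥ β := by
    rw [dotProduct_mulVec, vecMul_mulVec, hA, vecMul_one]
  simpa only [dotProduct, mulVec, sq] using h

theorem Real.sq_le_rpow_mul_rpow_of_rpow_le {p t M : ℝ} (hp : 0 < p) (hp2 : p ≤ 2)
    (ht : 0 ≤ t) (htM : t ^ p ≤ M) : t ^ 2 ≤ t ^ p * M ^ ((2 - p) / p) := by
  have hsplit : t ^ (2 : ℝ) = t ^ p * (t ^ p) ^ ((2 - p) / p) := by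
    rw [← Real.rpow_mul ht, mul_div_cancel₀ _ hp.ne', ← Real.rpow_add' ht (by norm_num)]
    norm_num
  rw [← Real.rpow_two, hsplit]
  gcongr

theorem Real.sqrt_sum_sq_le_of_rpow_le_mul_sum {ι : Type*} [Fintype ι] {p c : ℝ} (hp : 0 < p)
    (hp2 : p ≤ 2) (hc : 0 ≤ c) (y : ι → ℝ)
    (hy : ∀ i, |y i| ^ p ≤ c * ∑ j, |y j| ^ p) :
    Real.sqrt (∑ i, y i ^ 2) ≤ (∑ i, |y i| ^ p) ^ (1 / p) * c ^ ((2 - p) / (2 * p)) := by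
  set s := (∑ i, |y i| ^ p) ^ (1 / p)
  have hs : 0 ≤ s := by positivity
  have hsum : ∑ i, |y i| ^ p = s ^ p := by
    rw [← Real.rpow_mul (by positivity), one_div_mul_cancel hp.ne', Real.rpow_one]
  have hbound : ∑ i, y i ^ 2 ≤ (s * c ^ ((2 - p) / (2 * p))) ^ 2 := calc
    ∑ i, y i ^ 2 = ∑ i, |y i| ^ 2 := by simp only [sq_abs]
    _ ≤ ∑ i, |y i| ^ p * (c * s ^ p) ^ ((2 - p) / p) := by
      gcongr with i
      exact Real.sq_le_rpow_mul_rpow_of_rpow_le hp hp2 (abs_nonneg _) (hsum ▸ hy i)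
    _ = (s * c ^ ((2 - p) / (2 * p))) ^ 2 := by
      rw [← Finset.sum_mul, hsum, Real.mul_rpow hc (by positivity), ← Real.rpow_mul hs,
        mul_div_cancel₀ _ hp.ne', mul_left_comm, ← Real.rpow_add' hs (by norm_num), mul_pow,
        ← Real.rpow_natCast (c ^ _), ← Real.rpow_mul hc]
      have hexp : (2 - p) / (2 * p) * (2 : ℕ) = (2 - p) / p := by field_simp; ring
      rw [add_sub_cancel, hexp, Real.rpow_two, mul_comm]
  exact Real.sqrt_le_iff.mpr ⟨by positivity, hbound⟩

theorem two_norm_le_p_norm_of_uniform_importance_general {n d : ℕ}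
    (p α : ℝ) (hp : p ∈ Set.Ioo (1 : ℝ) 2) (hα : 0 < α)
    (A : Matrix (Fin n) (Fin d) ℝ) (hA : Aᵀ * A = 1)
    (himp : ∀ (x : Fin d → ℝ) (i : Fin n),
      |A i ⬝ᵥ x| ^ p ≤ (α * d / n) * ∑ j, |A j ⬝ᵥ x| ^ p) :
    ∀ β : Fin d → ℝ,
      Real.sqrt (∑ j, (β j) ^ 2) ≤
        (∑ i, |A i ⬝ᵥ β| ^ p) ^ (1 / p) * (α * d / n) ^ ((2 - p) / (2 * p)) := by
  intro β
  rw [← sum_sq_dotProduct_eq_of_transpose_mul_self_eq_one hA]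
  exact Real.sqrt_sum_sq_le_of_rpow_le_mul_sum (by linarith [hp.1]) hp.2.le (by positivity)
    (fun i ↦ A i ⬝ᵥ β) (himp β)

/-- If `AᵀA = I` and the ℓ_p importance weights of `A` are almost uniform, i.e.
`|a_i^⊤x|^p ≤ (αd/n)·‖Ax‖_p^p` for all `x` and `i`, then for every `β`,
`‖β‖_2 ≤ ‖Aβ‖_p · (α·d/n)^{(2−p)/(2p)}`. -/
theorem two_norm_le_p_norm_of_uniform_importance {n d : ℕ} (hn : 0 < n) (hd : 0 < d)
    (p α : ℝ) (hp : p ∈ Set.Ioo (1 : ℝ) 2) (hα : 0 < α)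
    (A : Matrix (Fin n) (Fin d) ℝ) (hA : Aᵀ * A = 1)
    (himp : ∀ (x : Fin d → ℝ) (i : Fin n),
      |A i ⬝ᵥ x| ^ p ≤ (α * d / n) * ∑ j, |A j ⬝ᵥ x| ^ p) :
    ∀ β : Fin d → ℝ,
      Real.sqrt (∑ j, (β j) ^ 2) ≤
        (∑ i, |A i ⬝ᵥ β| ^ p) ^ (1 / p) * (α * d / n) ^ ((2 - p) / (2 * p)) :=
  two_norm_le_p_norm_of_uniform_importance_general p α hp hα A hA himp
end
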